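/- Let d ≥ 1 and let N(u) = (n_1(u),…,n_d(u)) be d-tuples of positive integers indexed by positive integers u such that n_j(u)/u → α_j for reals α_j > 0 as u → ∞. Then for every complex w with Re(w) > d/2, lim_{u→∞} u^{−2w} · ∑_{Λ_K(u) ≠ 0} Λ_K(u)^{−w} = (2π)^{−2w} · ∑_{m ∈ ℤ^d, m ≠ 0} ((m_1/α_1)² + ⋯ + (m_d/α_d)²)^{−w}, where the series on the right converges absolutely. -/

import Mathlib

/-!
Since `2 - 2 cos 2x = (2 sin x)²` and `sin²` has period `π`, the eigenvalue `Λ_K` equals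
`∑ j, (2 sin (π m_j / n_j))²` where `m` is the balanced representative of `K`
(`-n_j < 2 m_j ≤ n_j`). This turns `u^(-2w) ζ_{N(u)}(w)` into a series over `ℤ^d ∖ 0` whose
`m`-th term tends to `((2π)² ∑ (m_j/α_j)²)^(-w)`, because `u sin (π m_j / n_j(u)) → π m_j / α_j`.
Jordan's inequality `|sin x| ≥ 2|x|/π` on the box bounds `u² Λ` below by `4 ∑ (m_j/α_j)²` for
large `u`, and this bound to the power `-Re w` is summable by comparison with the lattice sum
`∑ ‖m‖^(-2 Re w)`, so dominated convergence applies.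
-/

open MeasureTheory Real Filter

/-- Eigenvalues of the combinatorial Laplacian on the discrete torus determined by `N`. -/
noncomputable def Lam (d : ℕ) (N : Fin d → ℕ) (K : (j : Fin d) → Fin (N j)) : ℝ :=
  2 * d - ∑ j, 2 * Real.cos (2 * Real.pi * (K j : ℝ) / (N j : ℝ))

open Topology

lemma summable_norm_intCast_rpow {ι : Type*} [Fintype ι] {r : ℝ} (hr : r < -Fintype.card ι) :
    Summable fun m : ι → ℤ => ‖fun i => (m i : ℝ)‖ ^ r := by
  let L := Submodule.span ℤ (Set.range (Pi.basisFun ℝ ι))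
  have hrank : Module.finrank ℤ L = Fintype.card ι := by
    rw [ZLattice.rank ℝ, Module.finrank_fintype_fun_eq_card]
  have hmem (m : ι → ℤ) : (fun i => (m i : ℝ)) ∈ L :=
    ((Pi.basisFun ℝ ι).mem_span_iff_repr_mem ℤ _).mpr fun i => ⟨m i, rfl⟩
  have hL : Summable fun z : L => ‖(z : ι → ℝ)‖ ^ r :=
    ZLattice.summable_norm_rpow L r (by rw [hrank]; exact hr)
  let incl : (ι → ℤ) → L := fun m => ⟨_, hmem m⟩
  have hincl : Function.Injective incl := fun m m' h => funext fun i =>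
    Int.cast_injective (α := ℝ) (congrFun (congrArg Subtype.val h) i)
  exact (hL.comp_injective hincl).congr fun _ => rfl

lemma norm_intCast_sq_le {ι : Type*} [Fintype ι] {α : ι → ℝ} {A : ℝ} (hα : ∀ i, 0 < α i)
    (hA : ∀ i, α i ≤ A) (m : ι → ℤ) :
    ‖fun i => (m i : ℝ)‖ ^ 2 ≤ A ^ 2 * ∑ i, (m i / α i) ^ 2 := by
  refine (Real.le_sqrt (norm_nonneg _) (by positivity)).mp ?_
  refine (pi_norm_le_iff_of_nonneg (Real.sqrt_nonneg _)).mpr fun i => Real.abs_le_sqrt ?_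
  calc (m i : ℝ) ^ 2 = α i ^ 2 * (m i / α i) ^ 2 := by field_simp [(hα i).ne']
    _ ≤ A ^ 2 * (m i / α i) ^ 2 := by gcongr; exacts [(hα i).le, hA i]
    _ ≤ A ^ 2 * ∑ i, (m i / α i) ^ 2 := by
      gcongr
      exact Finset.single_le_sum (f := fun i => ((m i : ℝ) / α i) ^ 2) (fun i _ => sq_nonneg _)
        (Finset.mem_univ i)

lemma sum_div_sq_pos {ι : Type*} [Fintype ι] {α : ι → ℝ} (hα : ∀ i, α i ≠ 0) {m : ι → ℤ}
    (hm : m ≠ 0) : 0 < ∑ i, ((m i : ℝ) / α i) ^ 2 := by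
  obtain ⟨i, hi⟩ := Function.ne_iff.mp hm
  have : (m i : ℝ) ≠ 0 := by exact_mod_cast hi
  have := hα i
  exact Finset.sum_pos' (fun _ _ => sq_nonneg _) ⟨i, Finset.mem_univ i, by positivity⟩

lemma summable_sum_div_sq_rpow {ι : Type*} [Fintype ι] {α : ι → ℝ} (hα : ∀ i, 0 < α i) {s : ℝ}
    (hs : Fintype.card ι / 2 < s) :
    Summable fun m : {m : ι → ℤ // m ≠ 0} => (∑ i, ((m.1 i : ℝ) / α i) ^ 2) ^ (-s) := by
  obtain ⟨A, hA⟩ := Finite.exists_le α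
  have hA1 : 0 < max A 1 := lt_max_of_lt_right one_pos
  have hs0 : 0 < s := lt_of_le_of_lt (by positivity) hs
  refine (((summable_norm_intCast_rpow (ι := ι) (r := 2 * -s) (by linarith)).subtype
    {m | m ≠ 0}).mul_left ((max A 1 ^ 2) ^ s)).of_nonneg_of_le (fun m => by positivity) ?_
  rintro ⟨m, hm⟩
  have hm' : 0 < ‖fun i => (m i : ℝ)‖ :=
    norm_pos_iff.mpr fun h => hm (funext fun i => Int.cast_eq_zero.mp (congrFun h i))
  calc (∑ i, ((m i : ℝ) / α i) ^ 2) ^ (-s)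
      ≤ ((max A 1 ^ 2)⁻¹ * ‖fun i => (m i : ℝ)‖ ^ 2) ^ (-s) := by
        refine Real.rpow_le_rpow_of_nonpos (by positivity) ?_ (by linarith)
        rw [inv_mul_le_iff₀ (by positivity)]
        exact norm_intCast_sq_le hα (fun i => (hA i).trans (le_max_left _ _)) m
    _ = (max A 1 ^ 2) ^ s * ‖fun i => (m i : ℝ)‖ ^ (2 * -s) := by
        rw [Real.mul_rpow (by positivity) (by positivity), Real.inv_rpow (by positivity),
          ← Real.rpow_neg (by positivity), neg_neg, Real.rpow_mul hm'.le, Real.rpow_two]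

lemma sq_sin_pi_mul_div_congr {n : ℕ} {a b : ℤ} (h : (a : ZMod n) = b) :
    sin (π * a / n) ^ 2 = sin (π * b / n) ^ 2 := by
  obtain ⟨c, hc⟩ := (ZMod.intCast_eq_intCast_iff_dvd_sub a b n).mp h
  rcases eq_or_ne n 0 with rfl | hn
  · simp
  have hb : π * b / n = π * a / n + c * π := by
    rw [show (b : ℝ) = a + n * c by exact_mod_cast (by linarith : b = a + n * c)]
    field_simp
  rw [hb, sin_add_int_mul_pi, mul_pow, ← sq_abs ((-1 : ℝ) ^ c), abs_neg_one_zpow, one_pow,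
    one_mul]

lemma sq_div_le_sq_sin_pi_mul_div {n : ℕ} {x : ℤ} (hx : x * 2 ∈ Set.Ioc (-(n : ℤ)) n) :
    (2 * x / n) ^ 2 ≤ sin (π * x / n) ^ 2 := by
  obtain ⟨hlo, hhi⟩ := hx
  have hn : (0 : ℝ) < n := by exact_mod_cast (by omega : (0 : ℤ) < n)
  have h2x : 2 * |(x : ℝ)| ≤ n := by
    rw [← Int.cast_abs]
    exact_mod_cast (by rcases abs_cases x with ⟨h, -⟩ | ⟨h, -⟩ <;> rw [h] <;> omega :
      2 * |x| ≤ n)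
  rw [← sq_abs, ← sq_abs (sin _)]
  refine pow_le_pow_left₀ (abs_nonneg _) ?_ 2
  calc |2 * (x : ℝ) / n| = 2 / π * |π * x / n| := by
        rw [abs_div, abs_div, abs_mul, abs_mul, abs_of_pos pi_pos, abs_of_pos hn, abs_two]
        field_simp
    _ ≤ |sin (π * x / n)| := mul_abs_le_abs_sin (by
        rw [abs_div, abs_mul, abs_of_pos pi_pos, abs_of_pos hn, div_le_div_iff₀ hn two_pos]
        nlinarith [pi_pos])

noncomputable def torusEigenvalue {d : ℕ} (n : Fin d → ℕ) (m : Fin d → ℤ) : ℝ :=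
  ∑ j, (2 * sin (π * m j / n j)) ^ 2

def balancedBox {d : ℕ} (n : Fin d → ℕ) : Set (Fin d → ℤ) :=
  {m | ∀ j, m j * 2 ∈ Set.Ioc (-(n j : ℤ)) (n j)}

def balancedRep {d : ℕ} (n : Fin d → ℕ) (K : (j : Fin d) → Fin (n j)) : Fin d → ℤ :=
  fun j => ((K j : ℕ) : ZMod (n j)).valMinAbs

section Torus

variable {d : ℕ} {n : Fin d → ℕ}

lemma Lam_eq_torusEigenvalue (K : (j : Fin d) → Fin (n j)) :
    Lam d n K = torusEigenvalue n fun j => (K j : ℕ) := by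
  have h2d : (2 : ℝ) * d = ∑ _j : Fin d, 2 := by simp [mul_comm]
  rw [Lam, torusEigenvalue, h2d, ← Finset.sum_sub_distrib]
  refine Finset.sum_congr rfl fun j _ => ?_
  rw [show 2 * π * (K j : ℝ) / n j = 2 * (π * ((K j : ℕ) : ℤ) / n j) by push_cast; ring,
    cos_two_mul, cos_sq']
  ring

lemma Lam_nonneg (K : (j : Fin d) → Fin (n j)) : 0 ≤ Lam d n K := by
  rw [Lam_eq_torusEigenvalue]
  exact Finset.sum_nonneg fun _ _ => sq_nonneg _

lemma torusEigenvalue_balancedRep (K : (j : Fin d) → Fin (n j)) :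
    torusEigenvalue n (balancedRep n K) = Lam d n K := by
  rw [Lam_eq_torusEigenvalue, torusEigenvalue, torusEigenvalue]
  refine Finset.sum_congr rfl fun j _ => ?_
  rw [mul_pow, mul_pow, sq_sin_pi_mul_div_congr (b := ((K j : ℕ) : ℤ))]
  simp [balancedRep, ZMod.coe_valMinAbs]

lemma pos_of_mem_balancedBox {m : Fin d → ℤ} (hm : m ∈ balancedBox n) (j : Fin d) : 0 < n j := by
  have := (hm j).1.trans_le (hm j).2
  omega

lemma balancedRep_mem_balancedBox [∀ j, NeZero (n j)] (K : (j : Fin d) → Fin (n j)) :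
    balancedRep n K ∈ balancedBox n :=
  fun _ => ZMod.valMinAbs_mem_Ioc _

lemma balancedRep_injective : Function.Injective (balancedRep n) := by
  intro K K' h
  funext j
  have := ZMod.valMinAbs_inj.mp (congrFun h j)
  rw [ZMod.natCast_eq_natCast_iff', Nat.mod_eq_of_lt (K j).2, Nat.mod_eq_of_lt (K' j).2] at this
  exact Fin.ext this

lemma mem_range_balancedRep [∀ j, NeZero (n j)] {m : Fin d → ℤ} (hm : m ∈ balancedBox n) :
    m ∈ Set.range (balancedRep n) :=
  ⟨fun j => ⟨(m j : ZMod (n j)).val, ZMod.val_lt _⟩, funext fun j => by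
    simp only [balancedRep, ZMod.natCast_zmod_val]
    exact (ZMod.valMinAbs_spec _ _).mpr ⟨rfl, hm j⟩⟩

lemma sum_sq_div_le_torusEigenvalue {m : Fin d → ℤ} (hm : m ∈ balancedBox n) :
    ∑ j, (4 * (m j : ℝ) / n j) ^ 2 ≤ torusEigenvalue n m := by
  refine Finset.sum_le_sum fun j _ => ?_
  rw [mul_pow, show (4 * (m j : ℝ) / n j) ^ 2 = 2 ^ 2 * (2 * m j / n j) ^ 2 by ring]
  exact mul_le_mul_of_nonneg_left (sq_div_le_sq_sin_pi_mul_div (hm j)) (by norm_num)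

lemma torusEigenvalue_pos {m : Fin d → ℤ} (hm : m ∈ balancedBox n) (h0 : m ≠ 0) :
    0 < torusEigenvalue n m := by
  obtain ⟨j, hj⟩ := Function.ne_iff.mp h0
  refine lt_of_lt_of_le (Finset.sum_pos' (fun _ _ => sq_nonneg _) ⟨j, Finset.mem_univ j, ?_⟩)
    (sum_sq_div_le_torusEigenvalue hm)
  have : (0 : ℝ) < n j := Nat.cast_pos.mpr (pos_of_mem_balancedBox hm j)
  have : (m j : ℝ) ≠ 0 := by exact_mod_cast hj
  positivity

lemma sum_Lam_eq_tsum_indicator [∀ j, NeZero (n j)] {M : Type*} [AddCommMonoid M]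
    [TopologicalSpace M] (f : ℝ → M) :
    ∑ K ∈ Finset.univ.filter (fun K => Lam d n K ≠ 0), f (Lam d n K) =
      ∑' m : {m : Fin d → ℤ // m ≠ 0},
        (balancedBox n).indicator (fun m => f (torusEigenvalue n m)) m.1 := by
  classical
  let g : {K // Lam d n K ≠ 0} → {m : Fin d → ℤ // m ≠ 0} := fun K =>
    ⟨balancedRep n K, fun h => K.2 <| by
      rw [← torusEigenvalue_balancedRep, h]
      simp [torusEigenvalue]⟩
  have hg : Function.Injective g := fun K K' h =>
    Subtype.ext (balancedRep_injective (congrArg Subtype.val h))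
  rw [← hg.tsum_eq, tsum_fintype,
    Finset.sum_subtype (p := fun K => Lam d n K ≠ 0) (F := inferInstance) _ (by simp)]
  · simp only [g, Set.indicator_of_mem (balancedRep_mem_balancedBox _),
      torusEigenvalue_balancedRep]
  · rintro m hm
    have hbox : m.1 ∈ balancedBox n := by
      by_contra h
      exact hm (Set.indicator_of_notMem h _)
    obtain ⟨K, hK⟩ := mem_range_balancedRep hbox
    refine ⟨⟨K, ?_⟩, Subtype.ext hK⟩
    rw [← torusEigenvalue_balancedRep, hK]
    exact (torusEigenvalue_pos hbox m.2).ne'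

end Torus

lemma ofReal_sq_mul_cpow {a b : ℝ} (ha : 0 ≤ a) (hb : 0 ≤ b) (z : ℂ) :
    ((a ^ 2 * b : ℝ) : ℂ) ^ z = (a : ℂ) ^ (2 * z) * (b : ℂ) ^ z := by
  have hlog : (Complex.log a * 2).im = 0 := by
    rw [← Complex.ofReal_log ha, ← Complex.ofReal_ofNat, ← Complex.ofReal_mul, Complex.ofReal_im]
  rw [Complex.ofReal_mul, Complex.mul_cpow_ofReal_nonneg (sq_nonneg a) hb, Complex.ofReal_pow,
    Complex.cpow_mul _ (by rw [hlog]; linarith [pi_pos]) (by rw [hlog]; exact pi_pos.le),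
    Complex.cpow_ofNat]

lemma sin_eq_mul_sinc (x : ℝ) : sin x = x * sinc x := by
  rcases eq_or_ne x 0 with rfl | hx
  · simp
  · rw [sinc_of_ne_zero hx, mul_div_cancel₀ _ hx]

lemma tendsto_mul_sin_div {a : ℕ → ℝ} {α : ℝ} (hα : α ≠ 0)
    (h : Tendsto (fun u : ℕ => a u / u) atTop (𝓝 α)) (x : ℝ) :
    Tendsto (fun u : ℕ => u * sin (x / a u)) atTop (𝓝 (x / α)) := by
  have hinv : Tendsto (fun u : ℕ => (u : ℝ) / a u) atTop (𝓝 α⁻¹) := by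
    simpa only [inv_div] using h.inv₀ hα
  have harg : Tendsto (fun u : ℕ => x / a u) atTop (𝓝 0) := by
    refine ((hinv.const_mul x).div_atTop tendsto_natCast_atTop_atTop).congr' ?_
    filter_upwards [eventually_ne_atTop 0] with u hu
    field_simp
  have hsinc := (continuous_sinc.tendsto 0).comp harg
  rw [sinc_zero] at hsinc
  convert (hinv.const_mul x).mul hsinc using 1
  · funext u
    simp only [Function.comp_apply, sin_eq_mul_sinc (x / a u)]
    ring
  · rw [mul_one, div_eq_mul_inv]

section Degeneration

variable {d : ℕ} {N : ℕ → Fin d → ℕ} {α : Fin d → ℝ}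

lemma tendsto_sq_mul_torusEigenvalue (hα : ∀ j, α j ≠ 0)
    (hlim : ∀ j, Tendsto (fun u : ℕ => (N u j : ℝ) / u) atTop (𝓝 (α j))) (m : Fin d → ℤ) :
    Tendsto (fun u : ℕ => (u : ℝ) ^ 2 * torusEigenvalue (N u) m) atTop
      (𝓝 ((2 * π) ^ 2 * ∑ j, ((m j : ℝ) / α j) ^ 2)) := by
  have heq (u : ℕ) : (u : ℝ) ^ 2 * torusEigenvalue (N u) m =
      ∑ j, (2 * (u * sin (π * m j / N u j))) ^ 2 := by
    rw [torusEigenvalue, Finset.mul_sum]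
    exact Finset.sum_congr rfl fun j _ => by ring
  simp_rw [heq, Finset.mul_sum]
  refine tendsto_finsetSum _ fun j _ => ?_
  convert ((tendsto_mul_sin_div (hα j) (hlim j) (π * m j)).const_mul 2).pow 2 using 2
  ring

lemma eventually_mem_balancedBox (hα : ∀ j, 0 < α j)
    (hlim : ∀ j, Tendsto (fun u : ℕ => (N u j : ℝ) / u) atTop (𝓝 (α j))) (m : Fin d → ℤ) :
    ∀ᶠ u in atTop, m ∈ balancedBox (N u) := by
  refine eventually_all.mpr fun j => ?_
  have hN : Tendsto (fun u : ℕ => (N u j : ℝ)) atTop atTop := by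
    refine ((hlim j).pos_mul_atTop (hα j) tendsto_natCast_atTop_atTop).congr' ?_
    filter_upwards [eventually_ne_atTop 0] with u hu
    field_simp
  filter_upwards [hN.eventually_gt_atTop (2 * |(m j : ℝ)|)] with u hu
  have : 2 * |m j| < N u j := by exact_mod_cast hu
  constructor <;> cases abs_cases (m j) <;> omega

lemma eventually_four_mul_le_sq_mul_torusEigenvalue (hα : ∀ j, 0 < α j)
    (hlim : ∀ j, Tendsto (fun u : ℕ => (N u j : ℝ) / u) atTop (𝓝 (α j))) :
    ∀ᶠ u : ℕ in atTop, ∀ m ∈ balancedBox (N u),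
      4 * ∑ j, ((m j : ℝ) / α j) ^ 2 ≤ (u : ℝ) ^ 2 * torusEigenvalue (N u) m := by
  have hle : ∀ᶠ u : ℕ in atTop, ∀ j, (N u j : ℝ) / u ≤ 2 * α j := eventually_all.mpr fun j =>
    (hlim j).eventually (eventually_le_nhds (by linarith [hα j]))
  filter_upwards [hle, eventually_ne_atTop 0] with u hu hu0 m hm
  refine le_trans ?_
    (mul_le_mul_of_nonneg_left (sum_sq_div_le_torusEigenvalue hm) (by positivity))
  rw [Finset.mul_sum, Finset.mul_sum]
  refine Finset.sum_le_sum fun j _ => ?_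
  have hn : (0 : ℝ) < N u j := Nat.cast_pos.mpr (pos_of_mem_balancedBox hm j)
  have hNu : (N u j : ℝ) ≤ 2 * α j * u := by
    have := hu j
    rwa [div_le_iff₀ (by positivity)] at this
  rw [div_pow, div_pow, mul_div_assoc', mul_div_assoc', div_le_div_iff₀ (pow_pos (hα j) 2)
    (pow_pos hn 2)]
  have : (N u j : ℝ) ^ 2 ≤ (2 * α j * u) ^ 2 := pow_le_pow_left₀ hn.le hNu 2
  nlinarith [sq_nonneg (m j : ℝ)]

/-- The term of `u^(-2w) ζ_{N(u)}(w)` indexed by the balanced representative `m` of `K`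
(zero outside the box). -/
noncomputable def rescaledZetaTerm (n : Fin d → ℕ) (u : ℝ) (w : ℂ) (m : Fin d → ℤ) : ℂ :=
  (balancedBox n).indicator (fun m => ((u ^ 2 * torusEigenvalue n m : ℝ) : ℂ) ^ (-w)) m

lemma cpow_mul_sum_Lam_eq_tsum_rescaledZetaTerm {n : Fin d → ℕ} [∀ j, NeZero (n j)] {u : ℝ}
    (hu : 0 ≤ u) (w : ℂ) :
    (u : ℂ) ^ (-(2 * w)) *
        ∑ K ∈ Finset.univ.filter (fun K => Lam d n K ≠ 0), ((Lam d n K : ℝ) : ℂ) ^ (-w) =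
      ∑' m : {m : Fin d → ℤ // m ≠ 0}, rescaledZetaTerm n u w m := by
  have hterm (K : (j : Fin d) → Fin (n j)) : (u : ℂ) ^ (-(2 * w)) * ((Lam d n K : ℝ) : ℂ) ^ (-w) =
      ((u ^ 2 * Lam d n K : ℝ) : ℂ) ^ (-w) := by
    rw [ofReal_sq_mul_cpow hu (Lam_nonneg K), mul_neg]
  simp_rw [Finset.mul_sum, hterm]
  exact sum_Lam_eq_tsum_indicator fun x => ((u ^ 2 * x : ℝ) : ℂ) ^ (-w)

lemma tendsto_rescaledZetaTerm (hα : ∀ j, 0 < α j)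
    (hlim : ∀ j, Tendsto (fun u : ℕ => (N u j : ℝ) / u) atTop (𝓝 (α j))) (w : ℂ)
    {m : Fin d → ℤ} (hm : m ≠ 0) :
    Tendsto (fun u : ℕ => rescaledZetaTerm (N u) u w m) atTop
      (𝓝 ((((2 * π) ^ 2 * ∑ j, ((m j : ℝ) / α j) ^ 2 : ℝ) : ℂ) ^ (-w))) := by
  have hpos := sum_div_sq_pos (fun j => (hα j).ne') hm
  refine ((Complex.continuousAt_ofReal_cpow_const _ _ (Or.inr (by positivity))).tendsto.comp
    (tendsto_sq_mul_torusEigenvalue (fun j => (hα j).ne') hlim m)).congr' ?_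
  filter_upwards [eventually_mem_balancedBox hα hlim m] with u hu
  simp [rescaledZetaTerm, Set.indicator_of_mem hu]

lemma eventually_norm_rescaledZetaTerm_le (hα : ∀ j, 0 < α j)
    (hlim : ∀ j, Tendsto (fun u : ℕ => (N u j : ℝ) / u) atTop (𝓝 (α j))) {w : ℂ}
    (hw : 0 ≤ w.re) :
    ∀ᶠ u : ℕ in atTop, ∀ m : Fin d → ℤ, m ≠ 0 →
      ‖rescaledZetaTerm (N u) u w m‖ ≤ (4 * ∑ j, ((m j : ℝ) / α j) ^ 2) ^ (-w.re) := by
  filter_upwards [eventually_four_mul_le_sq_mul_torusEigenvalue hα hlim] with u hu m hm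
  have hpos : 0 < 4 * ∑ j, ((m j : ℝ) / α j) ^ 2 :=
    mul_pos four_pos (sum_div_sq_pos (fun j => (hα j).ne') hm)
  by_cases hbox : m ∈ balancedBox (N u)
  · rw [rescaledZetaTerm, Set.indicator_of_mem hbox,
      Complex.norm_cpow_eq_rpow_re_of_pos (hpos.trans_le (hu m hbox)), Complex.neg_re]
    exact Real.rpow_le_rpow_of_nonpos hpos (hu m hbox) (neg_nonpos.mpr hw)
  · rw [rescaledZetaTerm, Set.indicator_of_notMem hbox, norm_zero]
    positivity

end Degeneration

theorem spectral_zeta_tendsto_general (d : ℕ) (N : ℕ → Fin d → ℕ)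
    (α : Fin d → ℝ) (hα : ∀ j, 0 < α j)
    (hlim : ∀ j, Tendsto (fun u : ℕ => (N u j : ℝ) / (u : ℝ)) atTop (nhds (α j)))
    (w : ℂ) (hw : (d : ℝ) / 2 < w.re) :
    Summable (fun m : {m : Fin d → ℤ // m ≠ 0} =>
        ‖(((∑ j, ((m.1 j : ℝ) / α j) ^ 2 : ℝ)) : ℂ) ^ (-w)‖) ∧
    Tendsto (fun u : ℕ =>
        ((u : ℂ)) ^ (-(2 * w)) *
          ∑ K ∈ Finset.univ.filter
              (fun K : (j : Fin d) → Fin (N u j) => Lam d (N u) K ≠ 0),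
            (((Lam d (N u) K : ℝ) : ℂ)) ^ (-w))
      atTop
      (nhds ((((2 * Real.pi : ℝ) : ℂ)) ^ (-(2 * w)) *
        ∑' m : {m : Fin d → ℤ // m ≠ 0},
          (((∑ j, ((m.1 j : ℝ) / α j) ^ 2 : ℝ)) : ℂ) ^ (-w))) := by
  have hQ (m : {m : Fin d → ℤ // m ≠ 0}) := sum_div_sq_pos (fun j => (hα j).ne') m.2
  have hw0 : 0 ≤ w.re := (div_nonneg d.cast_nonneg two_pos.le).trans hw.le
  have hsum := summable_sum_div_sq_rpow hα (s := w.re) (by rwa [Fintype.card_fin])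
  refine ⟨hsum.congr fun m => by
    rw [Complex.norm_cpow_eq_rpow_re_of_pos (hQ m), Complex.neg_re], ?_⟩
  have hbound : Summable fun m : {m : Fin d → ℤ // m ≠ 0} =>
      (4 * ∑ j, ((m.1 j : ℝ) / α j) ^ 2) ^ (-w.re) :=
    (hsum.mul_left (4 ^ (-w.re))).congr fun m => (Real.mul_rpow four_pos.le (hQ m).le).symm
  have hlimit := tendsto_tsum_of_dominated_convergence hbound
    (fun m => tendsto_rescaledZetaTerm hα hlim w m.2)
    ((eventually_norm_rescaledZetaTerm_le hα hlim hw0).mono fun u hu m => hu m m.2)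
  simp_rw [ofReal_sq_mul_cpow two_pi_pos.le (hQ _).le, tsum_mul_left, mul_neg] at hlimit
  refine hlimit.congr' ?_
  filter_upwards [eventually_mem_balancedBox hα hlim 0] with u hu
  have (j : Fin d) : NeZero (N u j) := ⟨(pos_of_mem_balancedBox hu j).ne'⟩
  exact (cpow_mul_sum_Lam_eq_tsum_rescaledZetaTerm (Nat.cast_nonneg u) w).symm

/-- Convergence of rescaled spectral zeta functions of degenerating discrete tori to the
spectral zeta function of the limiting real torus, for `Re w > d/2`. -/
theorem spectral_zeta_tendsto (d : ℕ) (hd : 1 ≤ d) (N : ℕ → Fin d → ℕ)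
    (hN : ∀ u j, 0 < N u j) (α : Fin d → ℝ) (hα : ∀ j, 0 < α j)
    (hlim : ∀ j, Tendsto (fun u : ℕ => (N u j : ℝ) / (u : ℝ)) atTop (nhds (α j)))
    (w : ℂ) (hw : (d : ℝ) / 2 < w.re) :
    Summable (fun m : {m : Fin d → ℤ // m ≠ 0} =>
        ‖(((∑ j, ((m.1 j : ℝ) / α j) ^ 2 : ℝ)) : ℂ) ^ (-w)‖) ∧
    Tendsto (fun u : ℕ =>
        ((u : ℂ)) ^ (-(2 * w)) *
          ∑ K ∈ Finset.univ.filter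
              (fun K : (j : Fin d) → Fin (N u j) => Lam d (N u) K ≠ 0),
            (((Lam d (N u) K : ℝ) : ℂ)) ^ (-w))
      atTop
      (nhds ((((2 * Real.pi : ℝ) : ℂ)) ^ (-(2 * w)) *
        ∑' m : {m : Fin d → ℤ // m ≠ 0},
          (((∑ j, ((m.1 j : ℝ) / α j) ^ 2 : ℝ)) : ℂ) ^ (-w))) :=
  spectral_zeta_tendsto_general d N α hα hlim w hw
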